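/- Let t > 1/2 and let N ≥ 1 be an integer. Then ∑_{k=1}^{6} ∑_{n=N+1}^{∞} ( sup_{|z| ≤ 1} |φ_{k,n}′(z)| )^t ≤ 6 · 4^t · N^{1−2t}/(2t − 1). -/

import Mathlib

open Complex

/-- The Möbius map `f(z) = ((√3 − 1)z + 1)/(−z + √3 + 1)`. -/
noncomputable def apollonianF (z : ℂ) : ℂ :=
  ((Real.sqrt 3 - 1) * z + 1) / (-z + Real.sqrt 3 + 1)

/-- The rotation `R_θ(z) = e^{iθ} z`. -/
noncomputable def rot (θ : ℝ) (z : ℂ) : ℂ := Complex.exp (θ * I) * z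

/-- The angle `θ_k = (−1)^k · 2π/3`. -/
noncomputable def apollonianTheta (k : ℕ) : ℝ := (-1) ^ k * (2 * Real.pi / 3)

/-- The angle `θ'_k = 2πk/3`. -/
noncomputable def apollonianTheta' (k : ℕ) : ℝ := 2 * Real.pi * k / 3

/-- The Apollonian generator `φ_{k,n} = R_{θ'_k} ∘ f^n ∘ R_{θ_k} ∘ f`. -/
noncomputable def apollonianPhi (k n : ℕ) (z : ℂ) : ℂ :=
  rot (apollonianTheta' k) (apollonianF^[n] (rot (apollonianTheta k) (apollonianF z)))

open Filter Topology

/-!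
`f` is parabolic with fixed point `1`, so `f^[n]` is the explicit Möbius map
`w ↦ ((√3 - n) w + n) / (-n w + √3 + n)`, and by the chain rule
`|φ_{k,n}'(z)| = 9 / |E(z)|²` with `E` the product of the two denominators, an affine function
of `z`. Since `cos θ_k = -1/2`, the term `-n e^{iθ_k}` of `E` has positive real part, which gives
`|E| ≥ 3n/2` on the closed unit disk and hence `sup |φ_{k,n}'| ≤ 4 / n²`. The tail is then bounded
by the integral test, `∑_{n > N} n^{-2t} ≤ ∫_N^∞ x^{-2t} dx = N^{1-2t} / (2t - 1)`.
-/

theorem hasDerivAt_mobius {𝕜 : Type*} [NontriviallyNormedField 𝕜] (a b c d z : 𝕜)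
    (h : c * z + d ≠ 0) :
    HasDerivAt (fun z => (a * z + b) / (c * z + d)) ((a * d - b * c) / (c * z + d) ^ 2) z := by
  refine ((((hasDerivAt_id z).const_mul a).add_const b).div
    (((hasDerivAt_id z).const_mul c).add_const d) h).congr_deriv ?_
  simp only [id_eq, mul_one]
  ring

lemma ofReal_sqrt_three_mul_self : (√3 : ℂ) * √3 = 3 := by
  rw [← ofReal_mul, Real.mul_self_sqrt (by norm_num)]
  norm_num

/-- The matrix `[[√3 - 1, 1], [-1, √3 + 1]]` of `f` is parabolic, and its `n`-th power is
`(√3)^(n-1) • [[√3 - n, n], [-n, √3 + n]]`. -/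
noncomputable def apollonianFIter (n : ℕ) (w : ℂ) : ℂ :=
  ((√3 - n) * w + n) / (-n * w + √3 + n)

lemma apollonianF_apollonianFIter (n : ℕ) {w : ℂ} (h : -(n : ℂ) * w + √3 + n ≠ 0) :
    apollonianF (apollonianFIter n w) = apollonianFIter (n + 1) w := by
  have hs : (√3 : ℂ) ≠ 0 := ofReal_ne_zero.mpr (by positivity)
  rw [apollonianF, apollonianFIter, apollonianFIter, ← mul_div_mul_right _ _ h]
  have hnum : ((√3 - 1) * (((√3 - n) * w + n) / (-n * w + √3 + n)) + 1) * (-n * w + √3 + n)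
      = √3 * ((√3 - (n + 1 : ℕ)) * w + (n + 1 : ℕ)) := by
    rw [add_mul, mul_assoc, div_mul_cancel₀ _ h]
    push_cast
    ring
  have hden : (-(((√3 - n) * w + n) / (-n * w + √3 + n)) + √3 + 1) * (-n * w + √3 + n)
      = √3 * (-(n + 1 : ℕ) * w + √3 + (n + 1 : ℕ)) := by
    rw [add_mul, add_mul, neg_mul, div_mul_cancel₀ _ h]
    push_cast
    ring
  rw [hnum, hden, mul_div_mul_left _ _ hs]

lemma iterate_apollonianF (n : ℕ) {w : ℂ} (h : ∀ m < n, -(m : ℂ) * w + √3 + m ≠ 0) :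
    apollonianF^[n] w = apollonianFIter n w := by
  induction n with
  | zero =>
    have hs : (√3 : ℂ) ≠ 0 := ofReal_ne_zero.mpr (by positivity)
    simp [apollonianFIter, mul_div_cancel_left₀ _ hs]
  | succ n ih =>
    rw [Function.iterate_succ_apply', ih fun m hm => h m (by omega),
      apollonianF_apollonianFIter n (h n n.lt_succ_self)]

lemma hasDerivAt_apollonianFIter (n : ℕ) {w : ℂ} (h : -(n : ℂ) * w + √3 + n ≠ 0) :
    HasDerivAt (apollonianFIter n) (3 / (-n * w + √3 + n) ^ 2) w := by
  have hd := hasDerivAt_mobius ((√3 : ℂ) - n) n (-n) (√3 + n) w (by rwa [← add_assoc])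
  simp only [← add_assoc] at hd
  rwa [show ((√3 : ℂ) - n) * (√3 + n) - n * -n = 3 by
    linear_combination ofReal_sqrt_three_mul_self] at hd

lemma hasDerivAt_apollonianF {z : ℂ} (h : -z + √3 + 1 ≠ 0) :
    HasDerivAt apollonianF (3 / (-z + √3 + 1) ^ 2) z := by
  have hf : apollonianFIter 1 = apollonianF := by
    ext z
    simp [apollonianFIter, apollonianF]
  simpa [hf] using hasDerivAt_apollonianFIter 1 (w := z) (by simpa using h)

lemma apollonianFIter_den_ne_zero (m : ℕ) {w : ℂ} (hw : ‖w‖ ≤ 1) :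
    -(m : ℂ) * w + √3 + m ≠ 0 := by
  intro h0
  have h : ‖(m : ℂ) * w‖ = ‖((√3 + m : ℝ) : ℂ)‖ := by
    congr 1
    push_cast
    linear_combination -h0
  rw [norm_mul, Complex.norm_natCast, norm_real, Real.norm_of_nonneg (by positivity)] at h
  nlinarith [Real.sqrt_pos.mpr (show (0 : ℝ) < 3 by norm_num), (Nat.cast_nonneg m : (0 : ℝ) ≤ m)]

lemma apollonianF_den_ne_zero {z : ℂ} (hz : ‖z‖ ≤ 1) : -z + √3 + 1 ≠ 0 := by
  simpa using apollonianFIter_den_ne_zero 1 hz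

/-- `|den|² - |num|² = 2√3 |z - 1|² + 3 (1 - |z|²)`. -/
lemma norm_apollonianF_le_one {z : ℂ} (hz : ‖z‖ ≤ 1) : ‖apollonianF z‖ ≤ 1 := by
  have hs : √3 ^ 2 = 3 := Real.sq_sqrt (by norm_num)
  have key : ‖(√3 - 1) * z + 1‖ ^ 2 + 2 * √3 * ‖z - 1‖ ^ 2 + 3 * (1 - ‖z‖ ^ 2)
      = ‖-z + √3 + 1‖ ^ 2 := by
    simp only [Complex.sq_norm, normSq_apply, add_re, add_im, mul_re, mul_im, sub_re, sub_im,
      neg_re, neg_im, ofReal_re, ofReal_im, one_re, one_im]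
    linear_combination (z.re ^ 2 + z.im ^ 2 - 1) * hs
  rw [apollonianF, norm_div, div_le_one (norm_pos_iff.mpr (apollonianF_den_ne_zero hz))]
  refine le_of_sq_le_sq ?_ (norm_nonneg _)
  nlinarith [Real.sqrt_nonneg 3, sq_nonneg ‖z - 1‖, norm_nonneg z]

lemma cos_apollonianTheta (k : ℕ) : Real.cos (apollonianTheta k) = -1 / 2 := by
  have h : Real.cos (2 * Real.pi / 3) = -1 / 2 := by
    rw [show 2 * Real.pi / 3 = Real.pi - Real.pi / 3 by ring, Real.cos_pi_sub,
      Real.cos_pi_div_three]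
    norm_num
  rcases neg_one_pow_eq_or ℝ k with hk | hk <;>
    simp [apollonianTheta, hk, h]

lemma re_sub_norm_le_norm_mul_add {c d z : ℂ} (hz : ‖z‖ ≤ 1) : d.re - ‖c‖ ≤ ‖c * z + d‖ := by
  have hcz : ‖c * z‖ ≤ ‖c‖ := by
    rw [norm_mul]
    exact mul_le_of_le_one_right (norm_nonneg c) hz
  have := norm_sub_norm_le d (-(c * z))
  rw [norm_neg, sub_neg_eq_add, add_comm] at this
  linarith [re_le_norm d]

/-- Writing the expression as `c z + d`, one finds `re d - ‖c‖ = 3 + n - n re e ≥ 3 + 3n/2`. -/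
lemma le_norm_apollonianPhi_den (n : ℕ) {e z : ℂ} (he : ‖e‖ ≤ 1) (hre : e.re ≤ -1 / 2)
    (hz : ‖z‖ ≤ 1) :
    3 / 2 * n ≤ ‖-n * e * ((√3 - 1) * z + 1) + (√3 + n) * (-z + √3 + 1)‖ := by
  have hs : √3 ^ 2 = 3 := Real.sq_sqrt (by norm_num)
  have hs1 : 1 ≤ √3 := Real.one_le_sqrt.mpr (by norm_num)
  have hn : (0 : ℝ) ≤ n := n.cast_nonneg
  set c : ℂ := -n * e * (√3 - 1) - (√3 + n)
  set d : ℂ := -n * e + (√3 + n) * (√3 + 1)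
  have hE : -n * e * ((√3 - 1) * z + 1) + (√3 + n) * (-z + √3 + 1) = c * z + d := by ring
  have hd : d.re = -n * e.re + (√3 + n) * (√3 + 1) := by
    simp [d, mul_re]
  have hc : ‖c‖ ≤ n * (√3 - 1) + (√3 + n) := by
    refine (norm_sub_le _ _).trans (add_le_add ?_ ?_)
    · rw [norm_mul, norm_mul, norm_neg, Complex.norm_natCast, ← ofReal_one, ← ofReal_sub,
        norm_real, Real.norm_of_nonneg (by linarith)]
      gcongr
      exact mul_le_of_le_one_right hn he
    · rw [← ofReal_natCast, ← ofReal_add, norm_real, Real.norm_of_nonneg (by positivity)]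
  rw [hE]
  nlinarith [re_sub_norm_le_norm_mul_add (c := c) (d := d) hz]

lemma norm_rot (θ : ℝ) (z : ℂ) : ‖rot θ z‖ = ‖z‖ := by
  rw [rot, norm_mul, norm_exp_ofReal_mul_I, one_mul]

lemma hasDerivAt_rot (θ : ℝ) (z : ℂ) : HasDerivAt (rot θ) (exp (θ * I)) z := by
  have := (hasDerivAt_id z).const_mul (exp (θ * I))
  rw [mul_one] at this
  exact this

/-- Near the closed unit disk, `f^[n]` may be replaced by its closed form: the orbit never meets
a pole, although the junk value `x / 0 = 0` makes `f^[n]` differ from it elsewhere. -/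
lemma apollonianPhi_eventuallyEq (k n : ℕ) {z : ℂ} (hz : ‖z‖ ≤ 1) :
    apollonianPhi k n =ᶠ[𝓝 z] fun z =>
      rot (apollonianTheta' k) (apollonianFIter n (rot (apollonianTheta k) (apollonianF z))) := by
  have hcont : ContinuousAt (fun z => rot (apollonianTheta k) (apollonianF z)) z :=
    ((hasDerivAt_rot _ _).comp z
      (hasDerivAt_apollonianF (apollonianF_den_ne_zero hz))).continuousAt
  have hw : ‖rot (apollonianTheta k) (apollonianF z)‖ ≤ 1 := by
    rw [norm_rot]
    exact norm_apollonianF_le_one hz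
  have hden : ∀ m ∈ Set.Iio n, ∀ᶠ z' in 𝓝 z,
      -(m : ℂ) * rot (apollonianTheta k) (apollonianF z') + √3 + m ≠ 0 := fun m _ =>
    (show ContinuousAt (fun z' => -(m : ℂ) * rot (apollonianTheta k) (apollonianF z') + √3 + m) z
      from ((continuousAt_const.mul hcont).add continuousAt_const).add
        continuousAt_const).eventually_ne (apollonianFIter_den_ne_zero m hw)
  filter_upwards [(Set.finite_Iio n).eventually_all.mpr hden] with z' hz'
  rw [apollonianPhi, iterate_apollonianF n hz']

lemma hasDerivAt_apollonianPhi (k n : ℕ) {z : ℂ} (hz : ‖z‖ ≤ 1) :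
    HasDerivAt (apollonianPhi k n)
      (exp (apollonianTheta' k * I) *
        (3 / (-n * rot (apollonianTheta k) (apollonianF z) + √3 + n) ^ 2 *
          (exp (apollonianTheta k * I) * (3 / (-z + √3 + 1) ^ 2)))) z := by
  have hw : ‖rot (apollonianTheta k) (apollonianF z)‖ ≤ 1 := by
    rw [norm_rot]
    exact norm_apollonianF_le_one hz
  have hinner := (hasDerivAt_rot (apollonianTheta k) _).comp z
    (hasDerivAt_apollonianF (apollonianF_den_ne_zero hz))
  have hmid := (hasDerivAt_apollonianFIter n (apollonianFIter_den_ne_zero n hw)).comp z hinner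
  exact ((hasDerivAt_rot (apollonianTheta' k) _).comp z hmid).congr_of_eventuallyEq
    (apollonianPhi_eventuallyEq k n hz)

lemma norm_deriv_apollonianPhi_le (k : ℕ) {n : ℕ} (hn : 1 ≤ n) {z : ℂ} (hz : ‖z‖ ≤ 1) :
    ‖deriv (apollonianPhi k n) z‖ ≤ 4 / (n : ℝ) ^ 2 := by
  set e := exp (apollonianTheta k * I)
  have hD := apollonianF_den_ne_zero hz
  have hprod : (-n * rot (apollonianTheta k) (apollonianF z) + √3 + n) * (-z + √3 + 1)
      = -n * e * ((√3 - 1) * z + 1) + (√3 + n) * (-z + √3 + 1) := by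
    rw [rot, apollonianF]
    field_simp
    ring
  have hE := le_norm_apollonianPhi_den n (e := e) (norm_exp_ofReal_mul_I _).le
    (by rw [exp_ofReal_mul_I_re, cos_apollonianTheta]) hz
  rw [← hprod, norm_mul] at hE
  rw [(hasDerivAt_apollonianPhi k n hz).deriv]
  simp only [norm_mul, norm_div, norm_pow, norm_exp_ofReal_mul_I, one_mul, Complex.norm_ofNat]
  set A := ‖-n * rot (apollonianTheta k) (apollonianF z) + √3 + n‖
  set B := ‖-z + √3 + 1‖
  calc 3 / A ^ 2 * (3 / B ^ 2) = 9 / (A * B) ^ 2 := by ring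
    _ ≤ 9 / (3 / 2 * (n : ℝ)) ^ 2 := by gcongr
    _ = 4 / (n : ℝ) ^ 2 := by ring

lemma tsum_subtype_le_eq_tsum_add {α : Type*} [AddCommMonoid α] [TopologicalSpace α]
    (f : ℕ → α) (M : ℕ) : ∑' n : {m : ℕ // M ≤ m}, f n = ∑' k : ℕ, f (k + M) := by
  refine (Function.Injective.tsum_eq (g := fun k : ℕ => (⟨k + M, by omega⟩ : {m // M ≤ m}))
    (fun a b h => by simpa using congrArg Subtype.val h) ?_).symm
  rintro ⟨m, hm⟩ -
  exact ⟨m - M, Subtype.ext (by simp only; omega)⟩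

lemma summable_subtype_rpow_neg {q : ℝ} (hq : 1 < q) (M : ℕ) :
    Summable fun n : {m : ℕ // M ≤ m} => ((n : ℕ) : ℝ) ^ (-q) :=
  (Real.summable_nat_rpow.mpr (by linarith)).subtype _

lemma tsum_rpow_neg_le {q : ℝ} (hq : 1 < q) {N : ℕ} (hN : 1 ≤ N) :
    ∑' n : {m : ℕ // N + 1 ≤ m}, ((n : ℕ) : ℝ) ^ (-q) ≤ (N : ℝ) ^ (1 - q) / (q - 1) := by
  have hN' : (0 : ℝ) < N := by exact_mod_cast hN
  have hanti : AntitoneOn (fun x : ℝ => x ^ (-q)) (Set.Ici (N : ℝ)) := fun x hx y _ hxy =>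
    Real.rpow_le_rpow_of_nonpos (hN'.trans_le hx) hxy (by linarith)
  have htest := hanti.tsum_comp_add_le_integral N (integrableOn_Ioi_rpow_of_lt (by linarith) hN')
    fun x hx => Real.rpow_nonneg (hN'.trans hx).le _
  rw [integral_Ioi_rpow_of_lt (by linarith) hN'] at htest
  rw [tsum_subtype_le_eq_tsum_add (fun n : ℕ => (n : ℝ) ^ (-q))]
  convert htest using 1
  · simp only [add_assoc]
  · rw [neg_div, ← div_neg]
    ring_nf

lemma iSup_norm_deriv_apollonianPhi_rpow_le (k : ℕ) {n : ℕ} (hn : 1 ≤ n) {t : ℝ} (ht : 0 ≤ t) :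
    (⨆ z : Metric.closedBall (0 : ℂ) 1, ‖deriv (apollonianPhi k n) z‖) ^ t
      ≤ 4 ^ t * (n : ℝ) ^ (-(2 * t)) := by
  have hn' : (0 : ℝ) < n := by exact_mod_cast hn
  have hsup : (⨆ z : Metric.closedBall (0 : ℂ) 1, ‖deriv (apollonianPhi k n) z‖)
      ≤ 4 / (n : ℝ) ^ 2 := by
    have : Nonempty (Metric.closedBall (0 : ℂ) 1) := ⟨⟨0, Metric.mem_closedBall_self zero_le_one⟩⟩
    refine ciSup_le fun z => norm_deriv_apollonianPhi_le k hn ?_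
    exact mem_closedBall_zero_iff.mp z.2
  calc _ ≤ (4 / (n : ℝ) ^ 2) ^ t :=
        Real.rpow_le_rpow (Real.iSup_nonneg fun _ => norm_nonneg _) hsup ht
    _ = 4 ^ t * (n : ℝ) ^ (-(2 * t)) := by
      rw [Real.div_rpow (by norm_num) (by positivity), div_eq_mul_inv, ← Real.rpow_natCast,
        ← Real.rpow_mul hn'.le, Real.rpow_neg hn'.le, Nat.cast_ofNat]

/-- Tail bound for the Apollonian gasket: for `t > 1/2` and `N ≥ 1`,
`∑_{k=1}^{6} ∑_{n=N+1}^{∞} (sup_{|z| ≤ 1} |φ_{k,n}′(z)|)^t ≤ 6 · 4^t · N^{1−2t}/(2t−1)`. -/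
theorem apollonian_tail_bound (t : ℝ) (ht : 1/2 < t) (N : ℕ) (hN : 1 ≤ N) :
    ∑ k ∈ Finset.Icc 1 6, ∑' n : {m : ℕ // N + 1 ≤ m},
        (⨆ z : Metric.closedBall (0 : ℂ) 1,
            ‖deriv (apollonianPhi k n.1) z.1‖) ^ t ≤
      6 * (4 : ℝ) ^ t * (N : ℝ) ^ (1 - 2 * t) / (2 * t - 1) := by
  have hq : 1 < 2 * t := by linarith
  have hterm (k : ℕ) (n : {m : ℕ // N + 1 ≤ m}) :=
    iSup_norm_deriv_apollonianPhi_rpow_le k (n := n) (by omega) (t := t) (by linarith)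
  have hk (k : ℕ) : ∑' n : {m : ℕ // N + 1 ≤ m},
      (⨆ z : Metric.closedBall (0 : ℂ) 1, ‖deriv (apollonianPhi k n.1) z.1‖) ^ t
      ≤ 4 ^ t * ((N : ℝ) ^ (1 - 2 * t) / (2 * t - 1)) := by
    have hmaj := (summable_subtype_rpow_neg hq (N + 1)).mul_left (4 ^ t)
    have hsum := hmaj.of_nonneg_of_le
      (fun _ => Real.rpow_nonneg (Real.iSup_nonneg fun _ => norm_nonneg _) _) (hterm k)
    calc _ ≤ ∑' n : {m : ℕ // N + 1 ≤ m}, 4 ^ t * ((n : ℕ) : ℝ) ^ (-(2 * t)) :=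
          hsum.tsum_le_tsum (hterm k) hmaj
      _ = 4 ^ t * ∑' n : {m : ℕ // N + 1 ≤ m}, ((n : ℕ) : ℝ) ^ (-(2 * t)) := tsum_mul_left
      _ ≤ _ := by gcongr; exact tsum_rpow_neg_le hq hN
  calc _ ≤ ∑ k ∈ Finset.Icc 1 6, 4 ^ t * ((N : ℝ) ^ (1 - 2 * t) / (2 * t - 1)) :=
        Finset.sum_le_sum fun k _ => hk k
    _ = _ := by
      rw [Finset.sum_const, Nat.card_Icc, nsmul_eq_mul]
      push_cast
      ring
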